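/- arXiv:1606.03753 — 3 statements merged into one kernel-verified Lean document; each statement's English description precedes it below -/
import Mathlib

section
/- Let (V_1, V_2, V_3, V_4) be four disjoint finite planar point sets with same-type transversals such that every transversal is in convex position. Then the parts can be reordered so that every segment with one endpoint in V_1 and the other in V_2 crosses every segment with one endpoint in V_3 and the other in V_4. -/
open Finset
open scoped Classical BigOperators

noncomputable section

/-- Orientation determinant of an ordered triple of planar points. -/
def orient (p q r : ℝ × ℝ) : ℝ :=
  (q.1 - p.1) * (r.2 - p.2) - (q.2 - p.2) * (r.1 - p.1)

/-- A point placement is in general position if no three distinct vertices are collinear. -/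
def GenPos {V : Type*} (f : V → ℝ × ℝ) : Prop :=
  ∀ a b c : V, a ≠ b → a ≠ c → b ≠ c → orient (f a) (f b) (f c) ≠ 0

/-- Two straight-line segments cross: their interiors meet. -/
def SegCross (p q r s : ℝ × ℝ) : Prop :=
  (openSegment ℝ p q ∩ openSegment ℝ r s).Nonempty

/-- Weighted number of crossing pairs of edges in a straight-line drawing:
each unordered crossing pair {ab, cd} is counted once (via 8 ordered tuples). -/
def crossCount {V : Type*} [Fintype V] (w : V → V → ℝ) (f : V → ℝ × ℝ) : ℝ :=
  (∑ a : V, ∑ b : V, ∑ c : V, ∑ d : V,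
      if a ≠ b ∧ a ≠ c ∧ a ≠ d ∧ b ≠ c ∧ b ≠ d ∧ c ≠ d ∧
          SegCross (f a) (f b) (f c) (f d)
        then w a b * w c d else 0) / 8

/-- Rectilinear crossing number of an edge-weighted graph. -/
def wrcr (V : Type*) [Fintype V] (w : V → V → ℝ) : ℝ :=
  sInf {x : ℝ | ∃ f : V → ℝ × ℝ, Function.Injective f ∧ GenPos f ∧ crossCount w f = x}

/-- 0/1 edge weights of a simple graph. -/
def adjW {V : Type*} (G : SimpleGraph V) : V → V → ℝ :=
  fun u v => if G.Adj u v then 1 else 0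

/-- Rectilinear crossing number of a simple graph. -/
def rcr (n : ℕ) (G : SimpleGraph (Fin n)) : ℝ := wrcr (Fin n) (adjW G)

/-- Weighted number of edges between two vertex subsets. -/
def eW {V : Type*} (w : V → V → ℝ) (S T : Finset V) : ℝ :=
  ∑ u ∈ S, ∑ v ∈ T, w u v

/-- Number of edges of a simple graph between two vertex subsets
(edges inside the intersection counted twice). -/
def eG {n : ℕ} (G : SimpleGraph (Fin n)) (S T : Finset (Fin n)) : ℝ :=
  eW (adjW G) S T

/-- The part (fiber) of a colouring. -/
def fiber {n K : ℕ} (col : Fin n → Fin K) (i : Fin K) : Finset (Fin n) :=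
  Finset.univ.filter (fun v => col v = i)

/-- A colouring is an equitable partition: any two parts differ in size by at most one. -/
def EquitableCol {n K : ℕ} (col : Fin n → Fin K) : Prop :=
  ∀ i j : Fin K, (fiber col i).card ≤ (fiber col j).card + 1

/-- All transversals of three point sets have the same orientation. -/
def SameType3 (A B C : Finset (ℝ × ℝ)) : Prop :=
  ∀ a ∈ A, ∀ b ∈ B, ∀ c ∈ C, ∀ a' ∈ A, ∀ b' ∈ B, ∀ c' ∈ C,
    Real.sign (orient a b c) = Real.sign (orient a' b' c')

/-- Four point sets have same-type transversals. -/
def SameTypeQuad (A B C D : Finset (ℝ × ℝ)) : Prop :=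
  SameType3 A B C ∧ SameType3 A B D ∧ SameType3 A C D ∧ SameType3 B C D

/-- Four points are in convex position. -/
def ConvexPos4 (a b c d : ℝ × ℝ) : Prop :=
  a ∉ convexHull ℝ ({b, c, d} : Set (ℝ × ℝ)) ∧
  b ∉ convexHull ℝ ({a, c, d} : Set (ℝ × ℝ)) ∧
  c ∉ convexHull ℝ ({a, b, d} : Set (ℝ × ℝ)) ∧
  d ∉ convexHull ℝ ({a, b, c} : Set (ℝ × ℝ))

/-!
Segments `pq` and `rs` cross as soon as each of the lines `pq`, `rs` strictly separates the
endpoints of the other segment, which is a condition on the signs of four orientations. For a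
transversal `a, b, c, d` in convex and general position, one of the three pairings `ab|cd`,
`ac|bd`, `ad|bc` satisfies it, because every other sign pattern of the four orientations puts one
point inside the triangle of the other three. Same-type transversals all share these signs, so
the same pairing crosses for every transversal.
-/

lemma orient_rotate (p q r : ℝ × ℝ) : orient q r p = orient p q r := by
  unfold orient; ring

lemma orient_swap_left (p q r : ℝ × ℝ) : orient q p r = -orient p q r := by
  unfold orient; ring

lemma orient_swap_right (p q r : ℝ × ℝ) : orient p r q = -orient p q r := by
  unfold orient; ring

lemma pos_of_sign_eq {x y : ℝ} (h : Real.sign x = Real.sign y) (hy : 0 < y) : 0 < x := by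
  rw [Real.sign_of_pos hy] at h
  rcases lt_trichotomy x 0 with hx | hx | hx
  · rw [Real.sign_of_neg hx] at h; norm_num at h
  · rw [hx, Real.sign_zero] at h; norm_num at h
  · exact hx

lemma neg_of_sign_eq {x y : ℝ} (h : Real.sign x = Real.sign y) (hy : y < 0) : x < 0 :=
  neg_pos.1 <| pos_of_sign_eq (by rw [Real.sign_neg, Real.sign_neg, h]) (neg_pos.2 hy)

lemma mul_neg_of_sign_eq {x y x' y' : ℝ} (hx : Real.sign x = Real.sign x')
    (hy : Real.sign y = Real.sign y') (h : x' * y' < 0) : x * y < 0 := by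
  rcases mul_neg_iff.1 h with ⟨hx', hy'⟩ | ⟨hx', hy'⟩
  · exact mul_neg_of_pos_of_neg (pos_of_sign_eq hx hx') (neg_of_sign_eq hy hy')
  · exact mul_neg_of_neg_of_pos (neg_of_sign_eq hx hx') (pos_of_sign_eq hy hy')

lemma div_sub_mem_Ioo_of_mul_neg {x y : ℝ} (h : x * y < 0) : x / (x - y) ∈ Set.Ioo 0 1 := by
  rcases mul_neg_iff.1 h with ⟨hx, hy⟩ | ⟨hx, hy⟩
  · exact ⟨div_pos hx (by linarith), (div_lt_one (by linarith)).2 (by linarith)⟩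
  · exact ⟨div_pos_of_neg_of_neg hx (by linarith),
      (div_lt_one_of_neg (by linarith)).2 (by linarith)⟩

def OrientCross (p q r s : ℝ × ℝ) : Prop :=
  orient p q r * orient p q s < 0 ∧ orient r s p * orient r s q < 0

-- `orient r s` is affine along `pq`, so it vanishes at the parameter `t` below.
lemma OrientCross.segCross {p q r s : ℝ × ℝ} (h : OrientCross p q r s) : SegCross p q r s := by
  obtain ⟨hpq, hrs⟩ := h
  obtain ⟨ht₀, ht₁⟩ := div_sub_mem_Ioo_of_mul_neg hrs
  obtain ⟨hu₀, hu₁⟩ := div_sub_mem_Ioo_of_mul_neg hpq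
  set t := orient r s p / (orient r s p - orient r s q)
  set u := orient p q r / (orient p q r - orient p q s)
  have hrs₀ : orient r s p - orient r s q ≠ 0 := by
    rintro h; simp [t, h] at ht₀
  have hpq₀ : orient p q r - orient p q s ≠ 0 := by
    rintro h; simp [u, h] at hu₀
  have hmeet : (1 - t) • p + t • q = (1 - u) • r + u • s := by
    ext <;> simp only [Prod.fst_add, Prod.snd_add, Prod.smul_fst, Prod.smul_snd, smul_eq_mul,
      t, u] <;> field_simp <;> unfold orient <;> ring
  refine ⟨(1 - t) • p + t • q, ?_, ?_⟩
  · rw [openSegment_eq_image]; exact ⟨t, ⟨ht₀, ht₁⟩, rfl⟩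
  · rw [openSegment_eq_image]; exact ⟨u, ⟨hu₀, hu₁⟩, hmeet.symm⟩

-- Barycentric coordinates: `x` is the combination of `p, q, r` with weights proportional to
-- `orient q r x, orient r p x, orient p q x`, which sum to `orient p q r`.
lemma mem_convexHull_of_orient_mul_nonneg {p q r x : ℝ × ℝ} (h : orient p q r ≠ 0)
    (hp : 0 ≤ orient p q r * orient q r x) (hq : 0 ≤ orient p q r * orient r p x)
    (hr : 0 ≤ orient p q r * orient p q x) :
    x ∈ convexHull ℝ ({p, q, r} : Set (ℝ × ℝ)) := by
  set w := ![orient p q r * orient q r x, orient p q r * orient r p x,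
    orient p q r * orient p q x]
  have hsum : ∑ i, w i = orient p q r * orient p q r := by
    simp only [w, Fin.sum_univ_three, Matrix.cons_val_zero, Matrix.cons_val_one,
      Matrix.cons_val_two, Matrix.head_cons, Matrix.tail_cons]
    unfold orient; ring
  have hmem := Finset.centerMass_mem_convexHull Finset.univ (w := w) (z := ![p, q, r])
    (s := {p, q, r}) (fun i _ => by fin_cases i <;> assumption)
    (hsum ▸ mul_self_pos.2 h) (fun i _ => by fin_cases i <;> simp)
  convert hmem using 1
  rw [Finset.centerMass, hsum]
  ext <;> simp only [w, Fin.sum_univ_three, Matrix.cons_val_zero, Matrix.cons_val_one,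
      Matrix.cons_val, smul_add, Prod.fst_add, Prod.snd_add, Prod.smul_fst, Prod.smul_snd,
      smul_eq_mul] <;> field_simp <;> unfold orient <;> ring

lemma SameType3.rotate {A B C : Finset (ℝ × ℝ)} (h : SameType3 A B C) : SameType3 B C A :=
  fun b hb c hc a ha b' hb' c' hc' a' ha' => by
    rw [orient_rotate, orient_rotate a']; exact h a ha b hb c hc a' ha' b' hb' c' hc'

lemma SameType3.swap_left {A B C : Finset (ℝ × ℝ)} (h : SameType3 A B C) : SameType3 B A C :=
  fun b hb a ha c hc b' hb' a' ha' c' hc' => by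
    rw [orient_swap_left, orient_swap_left a', Real.sign_neg, Real.sign_neg,
      h a ha b hb c hc a' ha' b' hb' c' hc']

lemma SameType3.swap_right {A B C : Finset (ℝ × ℝ)} (h : SameType3 A B C) : SameType3 A C B :=
  fun a ha c hc b hb a' ha' c' hc' b' hb' => by
    rw [orient_swap_right, orient_swap_right a', Real.sign_neg, Real.sign_neg,
      h a ha b hb c hc a' ha' b' hb' c' hc']

lemma OrientCross.forall_segCross {A B C D : Finset (ℝ × ℝ)} {a₀ b₀ c₀ d₀ : ℝ × ℝ}
    (h : OrientCross a₀ b₀ c₀ d₀) (ha₀ : a₀ ∈ A) (hb₀ : b₀ ∈ B) (hc₀ : c₀ ∈ C) (hd₀ : d₀ ∈ D)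
    (hABC : SameType3 A B C) (hABD : SameType3 A B D) (hCDA : SameType3 C D A)
    (hCDB : SameType3 C D B) :
    ∀ a ∈ A, ∀ b ∈ B, ∀ c ∈ C, ∀ d ∈ D, SegCross a b c d :=
  fun a ha b hb c hc d hd => OrientCross.segCross
    ⟨mul_neg_of_sign_eq (hABC a ha b hb c hc a₀ ha₀ b₀ hb₀ c₀ hc₀)
      (hABD a ha b hb d hd a₀ ha₀ b₀ hb₀ d₀ hd₀) h.1,
    mul_neg_of_sign_eq (hCDA c hc d hd a ha c₀ hc₀ d₀ hd₀ a₀ ha₀)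
      (hCDB c hc d hd b hb c₀ hc₀ d₀ hd₀ b₀ hb₀) h.2⟩

lemma ConvexPos4.pairwise_ne {a b c d : ℝ × ℝ} (h : ConvexPos4 a b c d) :
    a ≠ b ∧ a ≠ c ∧ a ≠ d ∧ b ≠ c ∧ b ≠ d ∧ c ≠ d := by
  obtain ⟨ha, hb, hc, -⟩ := h
  replace ha := mt (subset_convexHull ℝ _ ·) ha
  replace hb := mt (subset_convexHull ℝ _ ·) hb
  replace hc := mt (subset_convexHull ℝ _ ·) hc
  simp only [Set.mem_insert_iff, Set.mem_singleton_iff, not_or] at ha hb hc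
  exact ⟨ha.1, ha.2.1, ha.2.2, hb.2.1, hb.2.2, hc.2.2⟩

lemma orient_mul_neg_of_not_mem_convexHull {p q r x : ℝ × ℝ} (h : orient p q r ≠ 0)
    (hx : x ∉ convexHull ℝ ({p, q, r} : Set (ℝ × ℝ))) :
    orient p q r * orient q r x < 0 ∨ orient p q r * orient r p x < 0 ∨
      orient p q r * orient p q x < 0 := by
  by_contra! hnonneg
  exact hx (mem_convexHull_of_orient_mul_nonneg h hnonneg.1 hnonneg.2.1 hnonneg.2.2)

-- Of the sixteen sign patterns of the four orientations, those with an odd number of positive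
-- entries put one point inside the triangle of the other three; each of the other eight makes
-- one of the three pairs of opposite segments cross.
lemma ConvexPos4.orientCross {a b c d : ℝ × ℝ} (h : ConvexPos4 a b c d)
    (h₁ : orient a b c ≠ 0) (h₂ : orient a b d ≠ 0) (h₃ : orient a c d ≠ 0)
    (h₄ : orient b c d ≠ 0) :
    OrientCross a b c d ∨ OrientCross a c b d ∨ OrientCross a d c b := by
  obtain ⟨ha, hb, hc, hd⟩ := h
  have hA := orient_mul_neg_of_not_mem_convexHull h₄ ha
  have hB := orient_mul_neg_of_not_mem_convexHull h₃ hb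
  have hC := orient_mul_neg_of_not_mem_convexHull h₂ hc
  have hD := orient_mul_neg_of_not_mem_convexHull h₁ hd
  rw [orient_rotate a c d, orient_swap_left b d a, orient_rotate a b d,
    orient_rotate a b c] at hA
  rw [orient_rotate b c d, orient_rotate b d a, orient_rotate a b d, orient_swap_right a b c] at hB
  rw [orient_swap_right b c d, orient_rotate c d a, orient_rotate a c d] at hC
  rw [orient_swap_left a c d] at hD
  unfold OrientCross
  rw [orient_rotate a c d, orient_rotate b c d, orient_swap_right a b c, orient_rotate a b d,
    orient_swap_right b c d, orient_swap_right a c d, orient_swap_right a b d,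
    orient_swap_left b c a, orient_rotate a b c, orient_swap_left b c d]
  generalize orient a b c = o₁, orient a b d = o₂, orient a c d = o₃, orient b c d = o₄ at *
  rcases h₁.lt_or_gt with h₁ | h₁ <;> rcases h₂.lt_or_gt with h₂ | h₂ <;>
    rcases h₃.lt_or_gt with h₃ | h₃ <;> rcases h₄.lt_or_gt with h₄ | h₄ <;>
    first
    | exact Or.inl ⟨by nlinarith, by nlinarith⟩
    | exact Or.inr (Or.inl ⟨by nlinarith, by nlinarith⟩)
    | exact Or.inr (Or.inr ⟨by nlinarith, by nlinarith⟩)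
    | exfalso; rcases hA with hA | hA | hA <;> nlinarith
    | exfalso; rcases hB with hB | hB | hB <;> nlinarith
    | exfalso; rcases hC with hC | hC | hC <;> nlinarith
    | exfalso; rcases hD with hD | hD | hD <;> nlinarith

theorem stmt_7_general (P : Fin 4 → Finset (ℝ × ℝ))
    (hgp : ∀ a ∈ P 0 ∪ P 1 ∪ P 2 ∪ P 3, ∀ b ∈ P 0 ∪ P 1 ∪ P 2 ∪ P 3,
      ∀ c ∈ P 0 ∪ P 1 ∪ P 2 ∪ P 3, a ≠ b → a ≠ c → b ≠ c → orient a b c ≠ 0)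
    (hst : SameTypeQuad (P 0) (P 1) (P 2) (P 3))
    (hconv : ∀ a ∈ P 0, ∀ b ∈ P 1, ∀ c ∈ P 2, ∀ d ∈ P 3, ConvexPos4 a b c d) :
    ∃ σ : Equiv.Perm (Fin 4),
      ∀ a ∈ P (σ 0), ∀ b ∈ P (σ 1), ∀ c ∈ P (σ 2), ∀ d ∈ P (σ 3),
        SegCross a b c d := by
  by_cases hempty : ∃ i, P i = ∅
  · obtain ⟨i, hi⟩ := hempty
    exact ⟨Equiv.swap 0 i, by simp [hi]⟩
  push Not at hempty
  obtain ⟨a, ha⟩ := hempty 0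
  obtain ⟨b, hb⟩ := hempty 1
  obtain ⟨c, hc⟩ := hempty 2
  obtain ⟨d, hd⟩ := hempty 3
  have ha' : a ∈ P 0 ∪ P 1 ∪ P 2 ∪ P 3 := by simp [ha]
  have hb' : b ∈ P 0 ∪ P 1 ∪ P 2 ∪ P 3 := by simp [hb]
  have hc' : c ∈ P 0 ∪ P 1 ∪ P 2 ∪ P 3 := by simp [hc]
  have hd' : d ∈ P 0 ∪ P 1 ∪ P 2 ∪ P 3 := by simp [hd]
  have habcd := hconv a ha b hb c hc d hd
  obtain ⟨hab, hac, had, hbc, hbd, hcd⟩ := habcd.pairwise_ne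
  obtain ⟨h012, h013, h023, h123⟩ := hst
  rcases habcd.orientCross (hgp a ha' b hb' c hc' hab hac hbc) (hgp a ha' b hb' d hd' hab had hbd)
      (hgp a ha' c hc' d hd' hac had hcd) (hgp b hb' c hc' d hd' hbc hbd hcd) with h | h | h
  · exact ⟨1, h.forall_segCross ha hb hc hd h012 h013 h023.rotate h123.rotate⟩
  · exact ⟨Equiv.swap 1 2, h.forall_segCross ha hc hb hd h012.swap_right h023
      h013.rotate h123.swap_right⟩
  · exact ⟨Equiv.swap 1 3, h.forall_segCross ha hd hc hb h023.swap_right h013.swap_right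
      h012.rotate.swap_left h123.swap_left⟩

/-- If four disjoint planar point sets in general position have same-type transversals and
every transversal is in convex position, then the parts can be reordered so that every
segment between the first two parts crosses every segment between the last two parts. -/
theorem stmt_7 (P : Fin 4 → Finset (ℝ × ℝ))
    (hdisj : ∀ i j : Fin 4, i ≠ j → Disjoint (P i) (P j))
    (hgp : ∀ a ∈ P 0 ∪ P 1 ∪ P 2 ∪ P 3, ∀ b ∈ P 0 ∪ P 1 ∪ P 2 ∪ P 3,
      ∀ c ∈ P 0 ∪ P 1 ∪ P 2 ∪ P 3, a ≠ b → a ≠ c → b ≠ c → orient a b c ≠ 0)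
    (hst : SameTypeQuad (P 0) (P 1) (P 2) (P 3))
    (hconv : ∀ a ∈ P 0, ∀ b ∈ P 1, ∀ c ∈ P 2, ∀ d ∈ P 3, ConvexPos4 a b c d) :
    ∃ σ : Equiv.Perm (Fin 4),
      ∀ a ∈ P (σ 0), ∀ b ∈ P (σ 1), ∀ c ∈ P (σ 2), ∀ d ∈ P (σ 3),
        SegCross a b c d :=
  stmt_7_general P hgp hst hconv
end
end

section
/- Let G be an edge-weighted graph on vertex set V with weights in [0,1], drawn with straight lines on a point set (in general position) equipped with an equitable partition V = V_1 ∪ … ∪ V_K. Let T be the set of quadruples of parts {i_1,i_2,i_3,i_4} with same-type transversals all in convex position, ordered so that every V_{i_1}–V_{i_2} segment crosses every V_{i_3}–V_{i_4} segment. Then the weighted number of crossings in the drawing is at least Σ_{(i_1,i_2,i_3,i_4) ∈ T} e_G(V_{i_1},V_{i_2}) · e_G(V_{i_3},V_{i_4}); in particular cr̄(G) is bounded below by this sum for an optimal drawing. -/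
open Finset
open scoped Classical BigOperators

noncomputable section

/-! Split the ordered vertex quadruples counted by `crossCount` according to the parts that
contain them. For `q = (i₁, i₂, i₃, i₄) ∈ T`, each of the 8 orderings of `q` that preserve the
pair of pairs `{{i₁, i₂}, {i₃, i₄}}` collects only crossing quadruples and so contributes
`e(V_{i₁}, V_{i₂}) · e(V_{i₃}, V_{i₄})`. Distinct members of `T` have distinct sets of parts, hence
disjoint families of orderings, and every other contribution is nonnegative. -/

section Quadruples

variable {α : Type*}

def QuadDistinct (q : α × α × α × α) : Prop :=
  q.1 ≠ q.2.1 ∧ q.1 ≠ q.2.2.1 ∧ q.1 ≠ q.2.2.2 ∧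
    q.2.1 ≠ q.2.2.1 ∧ q.2.1 ≠ q.2.2.2 ∧ q.2.2.1 ≠ q.2.2.2

variable [DecidableEq α]

def quadSupport (q : α × α × α × α) : Finset α :=
  {q.1, q.2.1, q.2.2.1, q.2.2.2}

/-- The orderings of `(i, j, k, l)` that describe the same pair of pairs `{{i, j}, {k, l}}`. -/
def quadOrbit (q : α × α × α × α) : Finset (α × α × α × α) :=
  {(q.1, q.2.1, q.2.2.1, q.2.2.2), (q.2.1, q.1, q.2.2.1, q.2.2.2),
   (q.1, q.2.1, q.2.2.2, q.2.2.1), (q.2.1, q.1, q.2.2.2, q.2.2.1),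
   (q.2.2.1, q.2.2.2, q.1, q.2.1), (q.2.2.2, q.2.2.1, q.1, q.2.1),
   (q.2.2.1, q.2.2.2, q.2.1, q.1), (q.2.2.2, q.2.2.1, q.2.1, q.1)}

theorem quadOrbit_induction {P : α × α × α × α → Prop}
    (swap_left : ∀ ⦃i j k l⦄, P (i, j, k, l) → P (j, i, k, l))
    (swap_right : ∀ ⦃i j k l⦄, P (i, j, k, l) → P (i, j, l, k))
    (swap_pairs : ∀ ⦃i j k l⦄, P (i, j, k, l) → P (k, l, i, j))
    {q p : α × α × α × α} (hq : P q) (hp : p ∈ quadOrbit q) : P p := by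
  obtain ⟨i, j, k, l⟩ := q
  simp only [quadOrbit, mem_insert, mem_singleton] at hp
  rcases hp with rfl | rfl | rfl | rfl | rfl | rfl | rfl | rfl
  exacts [hq, swap_left hq, swap_right hq, swap_left (swap_right hq), swap_pairs hq,
    swap_left (swap_pairs hq), swap_right (swap_pairs hq),
    swap_left (swap_right (swap_pairs hq))]

theorem QuadDistinct.of_mem_quadOrbit {q p : α × α × α × α} (hq : QuadDistinct q)
    (hp : p ∈ quadOrbit q) : QuadDistinct p :=
  quadOrbit_induction (P := QuadDistinct)
    (fun _ _ _ _ ⟨hij, hik, hil, hjk, hjl, hkl⟩ => ⟨hij.symm, hjk, hjl, hik, hil, hkl⟩)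
    (fun _ _ _ _ ⟨hij, hik, hil, hjk, hjl, hkl⟩ => ⟨hij, hil, hik, hjl, hjk, hkl.symm⟩)
    (fun _ _ _ _ ⟨hij, hik, hil, hjk, hjl, hkl⟩ =>
      ⟨hkl, hik.symm, hjk.symm, hil.symm, hjl.symm, hij⟩) hq hp

theorem quadSupport_eq_of_mem_quadOrbit {q p : α × α × α × α} (hp : p ∈ quadOrbit q) :
    quadSupport p = quadSupport q :=
  quadOrbit_induction (P := fun p => quadSupport p = quadSupport q)
    (fun i j _ _ h => h ▸ insert_comm j i _)
    (fun _ _ _ _ h => h ▸ by simp only [quadSupport, pair_comm])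
    (fun _ _ _ _ h => h ▸ by ext; simp only [quadSupport, mem_insert, mem_singleton]; grind)
    rfl hp

theorem card_quadOrbit {q : α × α × α × α} (hq : QuadDistinct q) : #(quadOrbit q) = 8 := by
  obtain ⟨i, j, k, l⟩ := q
  obtain ⟨hij, hik, hil, hjk, hjl, hkl⟩ := hq
  simp only [quadOrbit]
  repeat rw [card_insert_of_notMem (by simp [Prod.ext_iff]; tauto)]
  rfl

theorem pairwiseDisjoint_quadOrbit {T : Finset (α × α × α × α)}
    (hT : ∀ q ∈ T, ∀ q' ∈ T, q ≠ q' → quadSupport q ≠ quadSupport q') :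
    (T : Set (α × α × α × α)).PairwiseDisjoint quadOrbit :=
  fun q hq q' hq' hne => disjoint_left.2 fun _ hp hp' =>
    hT q hq q' hq' hne ((quadSupport_eq_of_mem_quadOrbit hp).symm.trans
      (quadSupport_eq_of_mem_quadOrbit hp'))

end Quadruples

theorem SegCross.swap_left {p q r s : ℝ × ℝ} (h : SegCross p q r s) : SegCross q p r s := by
  rwa [SegCross, openSegment_symm]

theorem SegCross.swap_right {p q r s : ℝ × ℝ} (h : SegCross p q r s) : SegCross p q s r := by
  rwa [SegCross, openSegment_symm ℝ s]

theorem SegCross.symm {p q r s : ℝ × ℝ} (h : SegCross p q r s) : SegCross r s p q := by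
  rwa [SegCross, Set.inter_comm]

theorem eW_comm {V : Type*} {w : V → V → ℝ} (hsymm : ∀ u v, w u v = w v u) (S T : Finset V) :
    eW w S T = eW w T S := by
  rw [eW, eW, sum_comm]
  simp only [hsymm]

def crossTerm {V : Type*} (w : V → V → ℝ) (f : V → ℝ × ℝ) (a b c d : V) : ℝ :=
  if a ≠ b ∧ a ≠ c ∧ a ≠ d ∧ b ≠ c ∧ b ≠ d ∧ c ≠ d ∧ SegCross (f a) (f b) (f c) (f d)
    then w a b * w c d else 0

theorem crossCount_eq_sum_crossTerm {V : Type*} [Fintype V] (w : V → V → ℝ) (f : V → ℝ × ℝ) :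
    crossCount w f = (∑ a, ∑ b, ∑ c, ∑ d, crossTerm w f a b c d) / 8 :=
  rfl

section Parts

variable {n K : ℕ} (w : Fin n → Fin n → ℝ) (f : Fin n → ℝ × ℝ) (col : Fin n → Fin K)

theorem sum_eq_sum_fiber4 {M : Type*} [AddCommMonoid M] (g : Fin n → Fin n → Fin n → Fin n → M) :
    ∑ a, ∑ b, ∑ c, ∑ d, g a b c d =
      ∑ p : Fin K × Fin K × Fin K × Fin K, ∑ a ∈ fiber col p.1, ∑ b ∈ fiber col p.2.1,
        ∑ c ∈ fiber col p.2.2.1, ∑ d ∈ fiber col p.2.2.2, g a b c d := by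
  have hfiber : ∀ p : Fin K × Fin K × Fin K × Fin K,
      univ.filter (fun x : Fin n × Fin n × Fin n × Fin n =>
          (col x.1, col x.2.1, col x.2.2.1, col x.2.2.2) = p) =
        fiber col p.1 ×ˢ fiber col p.2.1 ×ˢ fiber col p.2.2.1 ×ˢ fiber col p.2.2.2 := by
    intro p; ext x; simp [fiber, Prod.ext_iff]
  simp only [← Fintype.sum_prod_type']
  rw [← sum_fiberwise univ (fun x : Fin n × Fin n × Fin n × Fin n =>
    (col x.1, col x.2.1, col x.2.2.1, col x.2.2.2)) (fun x => g x.1 x.2.1 x.2.2.1 x.2.2.2)]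
  simp only [hfiber, sum_product]

def crossMass (p : Fin K × Fin K × Fin K × Fin K) : ℝ :=
  ∑ a ∈ fiber col p.1, ∑ b ∈ fiber col p.2.1, ∑ c ∈ fiber col p.2.2.1, ∑ d ∈ fiber col p.2.2.2,
    crossTerm w f a b c d

def pairWeight (p : Fin K × Fin K × Fin K × Fin K) : ℝ :=
  eW w (fiber col p.1) (fiber col p.2.1) * eW w (fiber col p.2.2.1) (fiber col p.2.2.2)

def PartsCross (p : Fin K × Fin K × Fin K × Fin K) : Prop :=
  ∀ a ∈ fiber col p.1, ∀ b ∈ fiber col p.2.1, ∀ c ∈ fiber col p.2.2.1, ∀ d ∈ fiber col p.2.2.2,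
    SegCross (f a) (f b) (f c) (f d)

variable {w f col}

theorem crossCount_mul_eight : crossCount w f * 8 = ∑ p, crossMass w f col p := by
  rw [crossCount_eq_sum_crossTerm, div_mul_cancel₀ _ (by norm_num), sum_eq_sum_fiber4 col]
  rfl

theorem crossMass_nonneg (hw : ∀ u v, 0 ≤ w u v) (p : Fin K × Fin K × Fin K × Fin K) :
    0 ≤ crossMass w f col p := by
  unfold crossMass crossTerm
  repeat refine sum_nonneg fun _ _ => ?_
  split_ifs
  exacts [mul_nonneg (hw _ _) (hw _ _), le_rfl]

theorem ne_of_mem_fiber {i j : Fin K} (hij : i ≠ j) {a b : Fin n} (ha : a ∈ fiber col i)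
    (hb : b ∈ fiber col j) : a ≠ b := by
  rintro rfl
  simp only [fiber, mem_filter] at ha hb
  exact hij (ha.2.symm.trans hb.2)

theorem crossMass_eq_pairWeight {p : Fin K × Fin K × Fin K × Fin K} (hp : QuadDistinct p)
    (hcross : PartsCross f col p) : crossMass w f col p = pairWeight w col p := by
  obtain ⟨hij, hik, hil, hjk, hjl, hkl⟩ := hp
  have hterm : ∀ a ∈ fiber col p.1, ∀ b ∈ fiber col p.2.1, ∀ c ∈ fiber col p.2.2.1,
      ∀ d ∈ fiber col p.2.2.2, crossTerm w f a b c d = w a b * w c d :=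
    fun a ha b hb c hc d hd => if_pos ⟨ne_of_mem_fiber hij ha hb, ne_of_mem_fiber hik ha hc,
      ne_of_mem_fiber hil ha hd, ne_of_mem_fiber hjk hb hc, ne_of_mem_fiber hjl hb hd,
      ne_of_mem_fiber hkl hc hd, hcross a ha b hb c hc d hd⟩
  simp only [pairWeight, eW, sum_mul_sum]
  refine sum_congr rfl fun a ha => ?_
  rw [sum_comm]
  exact sum_congr rfl fun c hc => sum_congr rfl fun b hb => sum_congr rfl fun d hd =>
    hterm a ha b hb c hc d hd

theorem PartsCross.of_mem_quadOrbit {q p : Fin K × Fin K × Fin K × Fin K}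
    (hq : PartsCross f col q) (hp : p ∈ quadOrbit q) : PartsCross f col p :=
  quadOrbit_induction (P := PartsCross f col)
    (fun _ _ _ _ h a ha b hb c hc d hd => (h b hb a ha c hc d hd).swap_left)
    (fun _ _ _ _ h a ha b hb c hc d hd => (h a ha b hb d hd c hc).swap_right)
    (fun _ _ _ _ h a ha b hb c hc d hd => (h c hc d hd a ha b hb).symm) hq hp

theorem pairWeight_eq_of_mem_quadOrbit (hsymm : ∀ u v, w u v = w v u)
    {q p : Fin K × Fin K × Fin K × Fin K} (hp : p ∈ quadOrbit q) :
    pairWeight w col p = pairWeight w col q :=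
  quadOrbit_induction (P := fun p => pairWeight w col p = pairWeight w col q)
    (fun _ j _ _ h => by rw [← h, pairWeight, pairWeight, eW_comm hsymm (fiber col j)])
    (fun _ _ _ l h => by rw [← h, pairWeight, pairWeight, eW_comm hsymm (fiber col l)])
    (fun _ _ _ _ h => by rw [← h, pairWeight, pairWeight, mul_comm])
    rfl hp

theorem sum_quadOrbit_crossMass (hsymm : ∀ u v, w u v = w v u)
    {q : Fin K × Fin K × Fin K × Fin K} (hq : QuadDistinct q) (hcross : PartsCross f col q) :
    ∑ p ∈ quadOrbit q, crossMass w f col p = 8 * pairWeight w col q := by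
  calc ∑ p ∈ quadOrbit q, crossMass w f col p
      = ∑ _p ∈ quadOrbit q, pairWeight w col q := sum_congr rfl fun p hp => by
        rw [crossMass_eq_pairWeight (hq.of_mem_quadOrbit hp) (hcross.of_mem_quadOrbit hp),
          pairWeight_eq_of_mem_quadOrbit hsymm hp]
    _ = 8 * pairWeight w col q := by rw [sum_const, card_quadOrbit hq, nsmul_eq_mul, Nat.cast_ofNat]

theorem sum_pairWeight_le_crossCount (hsymm : ∀ u v, w u v = w v u) (hw : ∀ u v, 0 ≤ w u v)
    {T : Finset (Fin K × Fin K × Fin K × Fin K)} (hdist : ∀ q ∈ T, QuadDistinct q)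
    (hsets : ∀ q ∈ T, ∀ q' ∈ T, q ≠ q' → quadSupport q ≠ quadSupport q')
    (hcross : ∀ q ∈ T, PartsCross f col q) :
    ∑ q ∈ T, pairWeight w col q ≤ crossCount w f := by
  rw [← mul_le_mul_iff_of_pos_right (by norm_num : (0 : ℝ) < 8), crossCount_mul_eight]
  calc (∑ q ∈ T, pairWeight w col q) * 8
      = ∑ q ∈ T, ∑ p ∈ quadOrbit q, crossMass w f col p := by
        rw [sum_mul]
        exact sum_congr rfl fun q hq => by
          rw [sum_quadOrbit_crossMass hsymm (hdist q hq) (hcross q hq), mul_comm]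
    _ = ∑ p ∈ T.biUnion quadOrbit, crossMass w f col p :=
        (sum_biUnion (pairwiseDisjoint_quadOrbit hsets)).symm
    _ ≤ ∑ p, crossMass w f col p :=
        sum_le_sum_of_subset_of_nonneg (subset_univ _) fun p _ _ => crossMass_nonneg hw p

end Parts

theorem stmt_8_general (n K : ℕ) (w : Fin n → Fin n → ℝ)
    (hsymm : ∀ u v, w u v = w v u) (hw : ∀ u v, 0 ≤ w u v ∧ w u v ≤ 1)
    (col : Fin n → Fin K) (f : Fin n → ℝ × ℝ)
    (T : Finset (Fin K × Fin K × Fin K × Fin K))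
    (hdist : ∀ q ∈ T, q.1 ≠ q.2.1 ∧ q.1 ≠ q.2.2.1 ∧ q.1 ≠ q.2.2.2 ∧
      q.2.1 ≠ q.2.2.1 ∧ q.2.1 ≠ q.2.2.2 ∧ q.2.2.1 ≠ q.2.2.2)
    (hsets : ∀ q ∈ T, ∀ q' ∈ T, q ≠ q' →
      ({q.1, q.2.1, q.2.2.1, q.2.2.2} : Finset (Fin K))
        ≠ ({q'.1, q'.2.1, q'.2.2.1, q'.2.2.2} : Finset (Fin K)))
    (hcross : ∀ q ∈ T, ∀ a ∈ fiber col q.1, ∀ b ∈ fiber col q.2.1,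
      ∀ c ∈ fiber col q.2.2.1, ∀ d ∈ fiber col q.2.2.2,
        SegCross (f a) (f b) (f c) (f d)) :
    (∑ q ∈ T, eW w (fiber col q.1) (fiber col q.2.1) *
        eW w (fiber col q.2.2.1) (fiber col q.2.2.2)) ≤ crossCount w f ∧
    (crossCount w f = wrcr (Fin n) w →
      (∑ q ∈ T, eW w (fiber col q.1) (fiber col q.2.1) *
          eW w (fiber col q.2.2.1) (fiber col q.2.2.2)) ≤ wrcr (Fin n) w) := by
  have hbound : ∑ q ∈ T, pairWeight w col q ≤ crossCount w f :=
    sum_pairWeight_le_crossCount hsymm (fun u v => (hw u v).1) hdist hsets hcross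
  exact ⟨hbound, fun hopt => hopt ▸ hbound⟩

/-- If `T` is a family of quadruples of parts (with pairwise distinct underlying
`4`-sets of parts) such that every segment between the first two parts crosses every
segment between the last two parts, then the weighted number of crossings of the drawing
is at least `Σ_{T} e_G(V_{i_1},V_{i_2})·e_G(V_{i_3},V_{i_4})`; in particular `cr̄(G)` is
bounded below by this sum when the drawing is optimal. -/
theorem stmt_8 (n K : ℕ) (w : Fin n → Fin n → ℝ)
    (hsymm : ∀ u v, w u v = w v u) (hw : ∀ u v, 0 ≤ w u v ∧ w u v ≤ 1)
    (col : Fin n → Fin K) (f : Fin n → ℝ × ℝ)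
    (hinj : Function.Injective f) (hgp : GenPos f)
    (T : Finset (Fin K × Fin K × Fin K × Fin K))
    (hdist : ∀ q ∈ T, q.1 ≠ q.2.1 ∧ q.1 ≠ q.2.2.1 ∧ q.1 ≠ q.2.2.2 ∧
      q.2.1 ≠ q.2.2.1 ∧ q.2.1 ≠ q.2.2.2 ∧ q.2.2.1 ≠ q.2.2.2)
    (hsets : ∀ q ∈ T, ∀ q' ∈ T, q ≠ q' →
      ({q.1, q.2.1, q.2.2.1, q.2.2.2} : Finset (Fin K))
        ≠ ({q'.1, q'.2.1, q'.2.2.1, q'.2.2.2} : Finset (Fin K)))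
    (hcross : ∀ q ∈ T, ∀ a ∈ fiber col q.1, ∀ b ∈ fiber col q.2.1,
      ∀ c ∈ fiber col q.2.2.1, ∀ d ∈ fiber col q.2.2.2,
        SegCross (f a) (f b) (f c) (f d)) :
    (∑ q ∈ T, eW w (fiber col q.1) (fiber col q.2.1) *
        eW w (fiber col q.2.2.1) (fiber col q.2.2.2)) ≤ crossCount w f ∧
    (crossCount w f = wrcr (Fin n) w →
      (∑ q ∈ T, eW w (fiber col q.1) (fiber col q.2.1) *
          eW w (fiber col q.2.2.1) (fiber col q.2.2.2)) ≤ wrcr (Fin n) w) :=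
  stmt_8_general n K w hsymm hw col f T hdist hsets hcross
end
end

section
/- Fix 0 < p < 1 and let (G_n) be quasi-random with density p. Then cr̄(G_n) ≤ p^2 · cr̄(K_n) + o(n^4). -/
open Finset
open scoped Classical BigOperators

noncomputable section

/-!
Take any straight-line drawing of `Kₙ` and place `Gₙ` on the same points by a uniformly random
bijection. Each ordered pair of vertex-disjoint edges of `Gₙ` then lands on any given ordered
quadruple of distinct points with the same probability, so the expected number of crossings of
`Gₙ` is the number of crossings of `Kₙ` scaled by the ratio of the numbers of disjoint edge pairs
of `Gₙ` and of `Kₙ`, and some bijection does at least as well as the average. By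
quasi-randomness the first number is at most `e(Gₙ)² = p²n⁴ + o(n⁴)`, while the second is
`n⁴ - O(n³)`.
-/

open Filter Topology

namespace RectilinearCrossing

/-- Ordered quadruples `(a, b, c, d)`, standing for the pair of oriented edges `ab`, `cd`. -/
abbrev Quad (V : Type*) := V × V × V × V

namespace Quad

variable {V : Type*}

def Distinct (q : Quad V) : Prop :=
  q.1 ≠ q.2.1 ∧ q.1 ≠ q.2.2.1 ∧ q.1 ≠ q.2.2.2 ∧ q.2.1 ≠ q.2.2.1 ∧ q.2.1 ≠ q.2.2.2 ∧
    q.2.2.1 ≠ q.2.2.2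

def weight (w : V → V → ℝ) (q : Quad V) : ℝ := w q.1 q.2.1 * w q.2.2.1 q.2.2.2

def IsCrossing (f : V → ℝ × ℝ) (q : Quad V) : Prop :=
  q.Distinct ∧ SegCross (f q.1) (f q.2.1) (f q.2.2.1) (f q.2.2.2)

def permMap (π : Equiv.Perm V) : Equiv.Perm (Quad V) :=
  π.prodCongr (π.prodCongr (π.prodCongr π))

@[simp]
lemma permMap_apply (π : Equiv.Perm V) (q : Quad V) :
    permMap π q = (π q.1, π q.2.1, π q.2.2.1, π q.2.2.2) := rfl

lemma weight_nonneg {w : V → V → ℝ} (hw : ∀ a b, 0 ≤ w a b) (q : Quad V) : 0 ≤ q.weight w :=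
  mul_nonneg (hw _ _) (hw _ _)

lemma Distinct.injective {q : Quad V} (hq : q.Distinct) :
    Function.Injective ![q.1, q.2.1, q.2.2.1, q.2.2.2] := by
  obtain ⟨h01, h02, h03, h12, h13, h23⟩ := hq
  intro i j hij
  fin_cases i <;> fin_cases j <;> simp_all [eq_comm]

@[simp]
lemma distinct_permMap (π : Equiv.Perm V) (q : Quad V) :
    (permMap π q).Distinct ↔ q.Distinct := by
  simp [Distinct]

lemma isCrossing_permMap (f : V → ℝ × ℝ) (π : Equiv.Perm V) (q : Quad V) :
    (permMap π q).IsCrossing f ↔ q.IsCrossing (f ∘ π) := by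
  rw [IsCrossing, IsCrossing, distinct_permMap]
  rfl

lemma exists_permMap_eq [Finite V] {q q' : Quad V} (hq : q.Distinct) (hq' : q'.Distinct) :
    ∃ π : Equiv.Perm V, permMap π q = q' := by
  obtain ⟨π, hπ⟩ := Equiv.Perm.exists_extending_pair _ _ hq.injective hq'.injective
  exact ⟨π, Prod.ext (hπ 0) (Prod.ext (hπ 1) (Prod.ext (hπ 2) (hπ 3)))⟩

end Quad

variable {V : Type*}

lemma adjW_nonneg (G : SimpleGraph V) (a b : V) : 0 ≤ adjW G a b := by
  unfold adjW; split_ifs <;> norm_num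

lemma GenPos.comp_perm {f : V → ℝ × ℝ} (hf : GenPos f) (π : Equiv.Perm V) : GenPos (f ∘ π) :=
  fun a b c hab hac hbc => hf (π a) (π b) (π c) (π.injective.ne hab) (π.injective.ne hac)
    (π.injective.ne hbc)

variable [Fintype V]

lemma crossCount_eq_sum (w : V → V → ℝ) (f : V → ℝ × ℝ) :
    8 * crossCount w f = ∑ q : Quad V, if q.IsCrossing f then q.weight w else 0 := by
  rw [crossCount, mul_div_cancel₀ _ (by norm_num : (8 : ℝ) ≠ 0)]
  simp only [Fintype.sum_prod_type, Quad.IsCrossing, Quad.Distinct, Quad.weight, and_assoc]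

lemma crossCount_nonneg {w : V → V → ℝ} (hw : ∀ a b, 0 ≤ w a b) (f : V → ℝ × ℝ) :
    0 ≤ crossCount w f := by
  have h : 0 ≤ 8 * crossCount w f := by
    rw [crossCount_eq_sum]
    exact Finset.sum_nonneg fun q _ => by
      split_ifs
      exacts [Quad.weight_nonneg hw q, le_rfl]
  linarith

def disjointPairWeight (w : V → V → ℝ) : ℝ :=
  ∑ q : Quad V, if q.Distinct then q.weight w else 0

lemma disjointPairWeight_nonneg {w : V → V → ℝ} (hw : ∀ a b, 0 ≤ w a b) :
    0 ≤ disjointPairWeight w :=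
  Finset.sum_nonneg fun q _ => by
    split_ifs
    exacts [Quad.weight_nonneg hw q, le_rfl]

lemma crossCount_le_disjointPairWeight {w : V → V → ℝ} (hw : ∀ a b, 0 ≤ w a b)
    (f : V → ℝ × ℝ) : 8 * crossCount w f ≤ disjointPairWeight w := by
  rw [crossCount_eq_sum, disjointPairWeight]
  refine Finset.sum_le_sum fun q _ => ?_
  by_cases hq : q.IsCrossing f
  · rw [if_pos hq, if_pos hq.1]
  · rw [if_neg hq]
    split_ifs
    exacts [Quad.weight_nonneg hw q, le_rfl]

lemma disjointPairWeight_le_sq {w : V → V → ℝ} (hw : ∀ a b, 0 ≤ w a b) :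
    disjointPairWeight w ≤ eW w univ univ ^ 2 := by
  have hsq : eW w univ univ ^ 2 = ∑ q : Quad V, q.weight w := by
    simp only [eW, sq, Finset.sum_mul_sum, Fintype.sum_prod_type, Quad.weight]
    exact Finset.sum_congr rfl fun a _ => Finset.sum_comm
  rw [hsq, disjointPairWeight]
  exact Finset.sum_le_sum fun q _ => by
    split_ifs
    exacts [le_rfl, Quad.weight_nonneg hw q]

lemma disjointPairWeight_top :
    disjointPairWeight (adjW (⊤ : SimpleGraph V)) = ∑ q : Quad V, if q.Distinct then 1 else 0 := by
  refine Finset.sum_congr rfl fun q _ => ?_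
  split_ifs with hq
  · simp [Quad.weight, adjW, hq.1, hq.2.2.2.2.2]
  · rfl

lemma disjointPairWeight_top_le :
    disjointPairWeight (adjW (⊤ : SimpleGraph V)) ≤ (Fintype.card V : ℝ) ^ 4 := by
  calc disjointPairWeight (adjW (⊤ : SimpleGraph V))
      ≤ ∑ _q : Quad V, (1 : ℝ) := by
        rw [disjointPairWeight_top]
        exact Finset.sum_le_sum fun q _ => by split_ifs <;> norm_num
    _ = (Fintype.card V : ℝ) ^ 4 := by simp; ring

/-- A quadruple that is not distinct has one of six coincidences, each of which leaves only
`|V| ^ 3` choices. -/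
lemma card_pow_sub_le_disjointPairWeight_top :
    (Fintype.card V : ℝ) ^ 4 - 6 * Fintype.card V ^ 3
      ≤ disjointPairWeight (adjW (⊤ : SimpleGraph V)) := by
  let coincidences : Quad V → ℝ := fun q =>
    (if q.1 = q.2.1 then 1 else 0) + (if q.1 = q.2.2.1 then 1 else 0) +
      (if q.1 = q.2.2.2 then 1 else 0) + (if q.2.1 = q.2.2.1 then 1 else 0) +
      (if q.2.1 = q.2.2.2 then 1 else 0) + (if q.2.2.1 = q.2.2.2 then 1 else 0)
  have hcover : ∀ q : Quad V, 1 ≤ (if q.Distinct then 1 else 0) + coincidences q := by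
    intro q
    unfold Quad.Distinct coincidences
    split_ifs <;> simp_all
    positivity
  have hcount : ∑ q : Quad V, coincidences q = 6 * (Fintype.card V : ℝ) ^ 3 := by
    simp only [coincidences, Finset.sum_add_distrib]
    simp only [Fintype.sum_prod_type]
    simp [apply_ite]
    ring
  have hle : ∑ _q : Quad V, (1 : ℝ)
      ≤ disjointPairWeight (adjW (⊤ : SimpleGraph V)) + ∑ q : Quad V, coincidences q := by
    rw [disjointPairWeight_top, ← Finset.sum_add_distrib]
    exact Finset.sum_le_sum fun q _ => hcover q
  have hall : ∑ _q : Quad V, (1 : ℝ) = (Fintype.card V : ℝ) ^ 4 := by simp; ring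
  linarith

lemma crossCount_top (f : V → ℝ × ℝ) :
    8 * crossCount (adjW (⊤ : SimpleGraph V)) f
      = ∑ q : Quad V, if q.IsCrossing f then 1 else 0 := by
  rw [crossCount_eq_sum]
  refine Finset.sum_congr rfl fun q _ => ?_
  split_ifs with hq
  · obtain ⟨⟨h01, -, -, -, -, h23⟩, -⟩ := hq
    simp [Quad.weight, adjW, h01, h23]
  · rfl

lemma crossCount_top_comp_perm (f : V → ℝ × ℝ) (π : Equiv.Perm V) :
    crossCount (adjW (⊤ : SimpleGraph V)) (f ∘ π) = crossCount (adjW ⊤) f := by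
  have h8 : 8 * crossCount (adjW (⊤ : SimpleGraph V)) (f ∘ π) = 8 * crossCount (adjW ⊤) f := by
    rw [crossCount_top, crossCount_top,
      ← Equiv.sum_comp (Quad.permMap π) fun q => if q.IsCrossing f then (1 : ℝ) else 0]
    simp only [Quad.isCrossing_permMap]
  linarith

/-- `Equiv.Perm V` acts transitively on distinct quadruples. -/
lemma exists_sum_perm_isCrossing (f : V → ℝ × ℝ) :
    ∃ α : ℝ, ∀ q : Quad V,
      (∑ π : Equiv.Perm V, if (Quad.permMap π q).IsCrossing f then 1 else 0)
        = if q.Distinct then α else 0 := by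
  have hzero : ∀ q : Quad V, ¬ q.Distinct →
      (∑ π : Equiv.Perm V, if (Quad.permMap π q).IsCrossing f then (1 : ℝ) else 0) = 0 :=
    fun q hq => Finset.sum_eq_zero fun π _ =>
      if_neg fun h => hq ((Quad.distinct_permMap π q).1 h.1)
  by_cases hV : ∃ q₀ : Quad V, q₀.Distinct
  · obtain ⟨q₀, hq₀⟩ := hV
    refine ⟨∑ π : Equiv.Perm V, if (Quad.permMap π q₀).IsCrossing f then 1 else 0,
      fun q => ?_⟩
    split_ifs with hq
    · obtain ⟨σ, rfl⟩ := Quad.exists_permMap_eq hq₀ hq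
      exact Equiv.sum_comp (Equiv.mulRight σ)
        (fun π => if (Quad.permMap π q₀).IsCrossing f then (1 : ℝ) else 0)
    · exact hzero q hq
  · simp only [not_exists] at hV
    exact ⟨0, fun q => by rw [hzero q (hV q), if_neg (hV q)]⟩

lemma exists_sum_perm_crossCount (f : V → ℝ × ℝ) :
    ∃ α : ℝ, ∀ w : V → V → ℝ,
      ∑ π : Equiv.Perm V, 8 * crossCount w (f ∘ π) = disjointPairWeight w * α := by
  obtain ⟨α, hα⟩ := exists_sum_perm_isCrossing f
  refine ⟨α, fun w => ?_⟩
  calc ∑ π : Equiv.Perm V, 8 * crossCount w (f ∘ π)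
      = ∑ q : Quad V, q.weight w *
          ∑ π : Equiv.Perm V, if (Quad.permMap π q).IsCrossing f then 1 else 0 := by
        simp only [crossCount_eq_sum, ← Quad.isCrossing_permMap, Finset.mul_sum, mul_ite,
          mul_one, mul_zero]
        exact Finset.sum_comm
    _ = disjointPairWeight w * α := by
        simp only [hα, disjointPairWeight, Finset.sum_mul, mul_ite, ite_mul, mul_zero, zero_mul]

/-- Some relabelling of `f` does at least as well as the average over all relabellings. -/
lemma exists_perm_crossCount_le (w : V → V → ℝ) (f : V → ℝ × ℝ) :
    ∃ π : Equiv.Perm V, disjointPairWeight (adjW (⊤ : SimpleGraph V)) * crossCount w (f ∘ π)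
      ≤ disjointPairWeight w * crossCount (adjW ⊤) f := by
  obtain ⟨α, hα⟩ := exists_sum_perm_crossCount f
  have hsum : ∑ π : Equiv.Perm V,
      disjointPairWeight (adjW (⊤ : SimpleGraph V)) * (8 * crossCount w (f ∘ π))
      = ∑ π : Equiv.Perm V, disjointPairWeight w * (8 * crossCount (adjW ⊤) (f ∘ π)) := by
    rw [← Finset.mul_sum _ _ (disjointPairWeight _), ← Finset.mul_sum _ _ (disjointPairWeight w),
      hα, hα]
    ring
  obtain ⟨π, -, hπ⟩ := Finset.exists_le_of_sum_le Finset.univ_nonempty hsum.le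
  refine ⟨π, ?_⟩
  rw [crossCount_top_comp_perm] at hπ
  linarith

open scoped Pointwise in
lemma mul_sInf_image_le_mul_sInf_image {α : Type*} {A : Set α} {F G : α → ℝ} {c d : ℝ}
    (hc : 0 ≤ c) (hd : 0 ≤ d) (hF : ∀ x, 0 ≤ F x) (h : ∀ x ∈ A, ∃ y ∈ A, c * F y ≤ d * G x) :
    c * sInf (F '' A) ≤ d * sInf (G '' A) := by
  rcases A.eq_empty_or_nonempty with rfl | hA
  · simp
  rw [← smul_eq_mul, ← smul_eq_mul, ← Real.sInf_smul_of_nonneg hc, ← Real.sInf_smul_of_nonneg hd]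
  refine le_csInf ((hA.image G).smul_set) ?_
  rintro _ ⟨_, ⟨x, hx, rfl⟩, rfl⟩
  obtain ⟨y, hy, hle⟩ := h x hx
  have hbdd : BddBelow (c • (F '' A)) := by
    refine ⟨0, ?_⟩
    rintro _ ⟨_, ⟨z, -, rfl⟩, rfl⟩
    exact mul_nonneg hc (hF z)
  exact (csInf_le hbdd (Set.smul_mem_smul_set ⟨y, hy, rfl⟩)).trans hle

lemma wrcr_eq_sInf_image (w : V → V → ℝ) :
    wrcr V w = sInf (crossCount w '' {f | Function.Injective f ∧ GenPos f}) := by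
  simp only [wrcr, Set.image, Set.mem_ofPred_eq, and_assoc]

lemma wrcr_nonneg {w : V → V → ℝ} (hw : ∀ a b, 0 ≤ w a b) : 0 ≤ wrcr V w :=
  Real.sInf_nonneg fun _ ⟨f, _, _, hf⟩ => hf ▸ crossCount_nonneg hw f

lemma disjointPairWeight_top_mul_wrcr_le {w : V → V → ℝ} (hw : ∀ a b, 0 ≤ w a b) :
    disjointPairWeight (adjW (⊤ : SimpleGraph V)) * wrcr V w
      ≤ disjointPairWeight w * wrcr V (adjW ⊤) := by
  rw [wrcr_eq_sInf_image, wrcr_eq_sInf_image]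
  refine mul_sInf_image_le_mul_sInf_image (disjointPairWeight_nonneg (adjW_nonneg ⊤))
    (disjointPairWeight_nonneg hw) (crossCount_nonneg hw) ?_
  rintro f ⟨hinj, hgen⟩
  obtain ⟨π, hπ⟩ := exists_perm_crossCount_le w f
  exact ⟨f ∘ π, ⟨hinj.comp π.injective, GenPos.comp_perm hgen π⟩, hπ⟩

lemma wrcr_le_disjointPairWeight {w : V → V → ℝ} (hw : ∀ a b, 0 ≤ w a b) :
    8 * wrcr V w ≤ disjointPairWeight w := by
  rw [wrcr_eq_sInf_image]
  rcases (crossCount w '' {f | Function.Injective f ∧ GenPos f}).eq_empty_or_nonempty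
    with h | ⟨_, f, hf, rfl⟩
  · simpa [h] using disjointPairWeight_nonneg hw
  · have hbdd : BddBelow (crossCount w '' {f | Function.Injective f ∧ GenPos f}) :=
      ⟨0, by rintro _ ⟨g, -, rfl⟩; exact crossCount_nonneg hw g⟩
    calc 8 * sInf (crossCount w '' {f | Function.Injective f ∧ GenPos f})
        ≤ 8 * crossCount w f := by gcongr; exact csInf_le hbdd ⟨f, hf, rfl⟩
      _ ≤ disjointPairWeight w := crossCount_le_disjointPairWeight hw f

lemma wrcr_top_le : wrcr V (adjW (⊤ : SimpleGraph V)) ≤ (Fintype.card V : ℝ) ^ 4 := by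
  have h8 := wrcr_le_disjointPairWeight (adjW_nonneg (⊤ : SimpleGraph V))
  linarith [disjointPairWeight_top_le (V := V), wrcr_nonneg (adjW_nonneg (⊤ : SimpleGraph V))]

lemma wrcr_le_sq_div_mul {w : V → V → ℝ} (hw : ∀ a b, 0 ≤ w a b)
    (hK : 0 < disjointPairWeight (adjW (⊤ : SimpleGraph V))) :
    wrcr V w ≤ eW w univ univ ^ 2 / disjointPairWeight (adjW (⊤ : SimpleGraph V)) *
      wrcr V (adjW ⊤) := by
  rw [div_mul_eq_mul_div, le_div_iff₀ hK, mul_comm]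
  calc disjointPairWeight (adjW ⊤) * wrcr V w
      ≤ disjointPairWeight w * wrcr V (adjW ⊤) := disjointPairWeight_top_mul_wrcr_le hw
    _ ≤ eW w univ univ ^ 2 * wrcr V (adjW ⊤) :=
        mul_le_mul_of_nonneg_right (disjointPairWeight_le_sq hw) (wrcr_nonneg (adjW_nonneg ⊤))

lemma max_wrcr_sub_mul_le {w : V → V → ℝ} (hw : ∀ a b, 0 ≤ w a b)
    (hK : 0 < disjointPairWeight (adjW (⊤ : SimpleGraph V))) (c : ℝ) :
    max (wrcr V w - c * wrcr V (adjW ⊤)) 0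
      ≤ max (eW w univ univ ^ 2 / disjointPairWeight (adjW (⊤ : SimpleGraph V)) - c) 0 *
        (Fintype.card V : ℝ) ^ 4 := by
  set r := eW w univ univ ^ 2 / disjointPairWeight (adjW (⊤ : SimpleGraph V))
  have hle := wrcr_le_sq_div_mul hw hK
  have hK_nonneg := wrcr_nonneg (adjW_nonneg (⊤ : SimpleGraph V))
  refine max_le ?_ (by positivity)
  calc wrcr V w - c * wrcr V (adjW ⊤) ≤ (r - c) * wrcr V (adjW ⊤) := by linarith
    _ ≤ max (r - c) 0 * wrcr V (adjW ⊤) := by gcongr; exact le_max_left _ _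
    _ ≤ max (r - c) 0 * (Fintype.card V : ℝ) ^ 4 := by gcongr; exact wrcr_top_le

lemma tendsto_disjointPairWeight_top_div_pow :
    Tendsto (fun n : ℕ => disjointPairWeight (adjW (⊤ : SimpleGraph (Fin n))) / (n : ℝ) ^ 4)
      atTop (𝓝 1) := by
  have hlower : Tendsto (fun n : ℕ => 1 - 6 / (n : ℝ)) atTop (𝓝 1) := by
    simpa using tendsto_const_nhds.sub (tendsto_const_div_atTop_nhds_zero_nat (6 : ℝ))
  refine tendsto_of_tendsto_of_tendsto_of_le_of_le' hlower tendsto_const_nhds ?_ ?_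
  · filter_upwards [eventually_gt_atTop 0] with n hn
    have hn' : (0 : ℝ) < n := by exact_mod_cast hn
    rw [le_div_iff₀ (by positivity)]
    have h := card_pow_sub_le_disjointPairWeight_top (V := Fin n)
    rw [Fintype.card_fin] at h
    calc (1 - 6 / (n : ℝ)) * n ^ 4 = n ^ 4 - 6 * n ^ 3 := by field_simp
      _ ≤ _ := h
  · filter_upwards [eventually_gt_atTop 0] with n hn
    have hn' : (0 : ℝ) < n := by exact_mod_cast hn
    rw [div_le_one (by positivity)]
    simpa using disjointPairWeight_top_le (V := Fin n)

lemma tendsto_div_sq_of_abs_sub_le {a o : ℕ → ℝ} {p : ℝ}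
    (ho : Tendsto (fun n => o n / (n : ℝ) ^ 2) atTop (𝓝 0))
    (h : ∀ n, |a n - p * n * n| ≤ o n) :
    Tendsto (fun n => a n / (n : ℝ) ^ 2) atTop (𝓝 p) := by
  rw [tendsto_iff_norm_sub_tendsto_zero]
  refine squeeze_zero' (Eventually.of_forall fun n => norm_nonneg _) ?_ ho
  filter_upwards [eventually_gt_atTop 0] with n hn
  have hn' : (0 : ℝ) < (n : ℝ) ^ 2 := by positivity
  rw [Real.norm_eq_abs, show a n / (n : ℝ) ^ 2 - p = (a n - p * n * n) / (n : ℝ) ^ 2 by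
    field_simp, abs_div, abs_of_pos hn']
  exact div_le_div_of_nonneg_right (h n) hn'.le

end RectilinearCrossing

open RectilinearCrossing

theorem stmt_16_general (p : ℝ)
    (G : ∀ n : ℕ, SimpleGraph (Fin n))
    (hqr : ∃ o : ℕ → ℝ,
      Filter.Tendsto (fun n => o n / (n : ℝ) ^ 2) Filter.atTop (nhds 0) ∧
      ∀ n : ℕ, ∀ X Y : Finset (Fin n),
        |eG (G n) X Y - p * X.card * Y.card| ≤ o n) :
    ∃ g : ℕ → ℝ, Filter.Tendsto (fun n => g n / (n : ℝ) ^ 4) Filter.atTop (nhds 0) ∧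
      ∀ n : ℕ, rcr n (G n) ≤ p ^ 2 * rcr n ⊤ + g n := by
  obtain ⟨o, ho, hG⟩ := hqr
  set N : ℕ → ℝ := fun n => disjointPairWeight (adjW (⊤ : SimpleGraph (Fin n)))
  set E : ℕ → ℝ := fun n => eG (G n) univ univ
  have hE : Tendsto (fun n => E n / (n : ℝ) ^ 2) atTop (𝓝 p) :=
    tendsto_div_sq_of_abs_sub_le ho fun n => by simpa using hG n univ univ
  have hN : Tendsto (fun n => N n / (n : ℝ) ^ 4) atTop (𝓝 1) :=
    tendsto_disjointPairWeight_top_div_pow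
  have hexcess : Tendsto (fun n => max ((E n / (n : ℝ) ^ 2) ^ 2 / (N n / (n : ℝ) ^ 4) - p ^ 2) 0)
      atTop (𝓝 0) := by
    have h := ((hE.pow 2).div hN one_ne_zero).sub_const (p ^ 2)
    rw [div_one, sub_self] at h
    exact h.max_left
  refine ⟨fun n => max (rcr n (G n) - p ^ 2 * rcr n ⊤) 0, squeeze_zero' ?_ ?_ hexcess,
    fun n => by linarith [le_max_left (rcr n (G n) - p ^ 2 * rcr n ⊤) 0]⟩
  · exact Eventually.of_forall fun n => div_nonneg (le_max_right _ _) (by positivity)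
  filter_upwards [hN.eventually (lt_mem_nhds zero_lt_one)] with n hn
  have hn4 : (0 : ℝ) < (n : ℝ) ^ 4 := (pow_nonneg n.cast_nonneg 4).lt_of_ne fun h => by
    simp [← h] at hn
  have hn0 : (n : ℝ) ≠ 0 := fun h => by simp [h] at hn4
  have hbound := max_wrcr_sub_mul_le (adjW_nonneg (G n))
    ((div_pos_iff_of_pos_right hn4).mp hn) (p ^ 2)
  rw [Fintype.card_fin] at hbound
  rw [div_le_iff₀ hn4, show (E n / (n : ℝ) ^ 2) ^ 2 / (N n / (n : ℝ) ^ 4) = E n ^ 2 / N n by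
    field_simp]
  exact hbound

/-- For a quasi-random sequence with density `p`: `cr̄(G_n) ≤ p^2 cr̄(K_n) + o(n^4)`. -/
theorem stmt_16 (p : ℝ) (hp : 0 < p) (hp1 : p < 1)
    (G : ∀ n : ℕ, SimpleGraph (Fin n))
    (hqr : ∃ o : ℕ → ℝ,
      Filter.Tendsto (fun n => o n / (n : ℝ) ^ 2) Filter.atTop (nhds 0) ∧
      ∀ n : ℕ, ∀ X Y : Finset (Fin n),
        |eG (G n) X Y - p * X.card * Y.card| ≤ o n) :
    ∃ g : ℕ → ℝ, Filter.Tendsto (fun n => g n / (n : ℝ) ^ 4) Filter.atTop (nhds 0) ∧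
      ∀ n : ℕ, rcr n (G n) ≤ p ^ 2 * rcr n ⊤ + g n :=
  stmt_16_general p G hqr
end
end
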